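/- Let G be a topologically sorted DAG on n nodes with |E| edges. Then the field of fractions of the integral domain R ⧸ p_G is isomorphic as a ℂ-algebra to the field of rational functions in n + |E| variables over ℂ, i.e., to the fraction field of MvPolynomial (Fin (n + |E|)) ℂ. -/

import Mathlib

open MvPolynomial Matrix

noncomputable section

/-- The parent set of a node `j` in the DAG with edge relation `E`. -/
def parents {n : ℕ} (E : Fin n → Fin n → Prop) [DecidableRel E] (j : Fin n) : Finset (Fin n) :=
  Finset.univ.filter (fun i => E i j)

/-- The minor of `M` with rows `A` and columns `B`, each listed in increasing order. -/
def fminor {n : ℕ} {R : Type*} [CommRing R] (M : Matrix (Fin n) (Fin n) R)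
    (A B : Finset (Fin n)) (h : B.card = A.card) : R :=
  Matrix.det (Matrix.of fun k l : Fin A.card =>
    M (A.orderEmbOfFin rfl k) (B.orderEmbOfFin h l))

/-- The generic symmetric matrix, with `(i,j)` entry the variable indexed by the unordered
pair `s(i,j)`. -/
def genMat (n : ℕ) : Matrix (Fin n) (Fin n) (MvPolynomial (Sym2 (Fin n)) ℂ) :=
  fun i j => X s(i, j)

/-- The ideal of imposed relations `I_G`, generated by the minors `det M_{{i}∪K,{j}∪K}` over all
pairs `i < j` with `¬ E i j`, where `K = pa(j)`. -/
def impIdeal {n : ℕ} (E : Fin n → Fin n → Prop) [DecidableRel E] :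
    Ideal (MvPolynomial (Sym2 (Fin n)) ℂ) :=
  Ideal.span { f | ∃ i j : Fin n, ∃ _ : i < j, ∃ _ : ¬ E i j,
    ∃ h : (insert j (parents E j)).card = (insert i (parents E j)).card,
      f = fminor (genMat n) (insert i (parents E j)) (insert j (parents E j)) h }

/-- The product `θ₀` of all principal minors of the generic symmetric matrix. -/
def theta0 (n : ℕ) : MvPolynomial (Sym2 (Fin n)) ℂ :=
  ∏ A : Finset (Fin n), fminor (genMat n) A A rfl

/-- The saturation `{f | ∃ m, g ^ m * f ∈ I}` of an ideal `I` at an element `g`. -/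
def satIdeal {R : Type*} [CommRing R] (I : Ideal R) (g : R) : Ideal R where
  carrier := {f | ∃ m : ℕ, g ^ m * f ∈ I}
  zero_mem' := ⟨0, by simp⟩
  add_mem' := by
    rintro a b ⟨ma, ha⟩ ⟨mb, hb⟩
    refine ⟨ma + mb, ?_⟩
    have h : g ^ (ma + mb) * (a + b) = g ^ mb * (g ^ ma * a) + g ^ ma * (g ^ mb * b) := by
      ring
    rw [h]
    exact I.add_mem (I.mul_mem_left _ ha) (I.mul_mem_left _ hb)
  smul_mem' := by
    rintro c a ⟨m, hm⟩
    refine ⟨m, ?_⟩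
    have h : g ^ m * (c • a) = c * (g ^ m * a) := by
      simp only [smul_eq_mul]; ring
    rw [h]
    exact I.mul_mem_left _ hm


/-- The saturation `p_G` of `I_G` at `θ₀`. -/
def satPG {n : ℕ} (E : Fin n → Fin n → Prop) [DecidableRel E] :
    Ideal (MvPolynomial (Sym2 (Fin n)) ℂ) :=
  satIdeal (impIdeal E) (theta0 n)

/-- The number of edges of the DAG. -/
def edgeCount {n : ℕ} (E : Fin n → Fin n → Prop) [DecidableRel E] : ℕ :=
  (Finset.univ.filter (fun p : Fin n × Fin n => E p.1 p.2)).card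


/-!
The parametrization `φ : S ↦ (1 - Λ)⁻ᵀ diag(ω) (1 - Λ)⁻¹` into the polynomial ring in the
`n + |E|` noise variances and edge weights has kernel `p_G`. On the rows `k < j`, column `j` of
`φ(S)` is the `Λ`-combination of the columns `pa(j)`, so `φ` kills `I_G`; and `φ(θ₀) ≠ 0`, as it
is `1` at `Λ = 0, ω = 1`. Conversely, where `θ₀` is invertible, the regression coefficients
`S_{pa,pa}⁻¹ S_{pa,j}` and residual variances recover the parameters: the generator of `I_G` for
`k ∉ pa(j)` is, up to the unit `det S_{pa,pa}`, the defect of the structural equation in row `k`,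
so a symmetric `S` killing `I_G` is the covariance matrix of its own regression parameters.
Over `(R ⧸ I_G)[θ₀⁻¹]` this is a left inverse of `φ`, giving `ker φ ⊆ p_G`; over
`Frac(R ⧸ p_G)` it writes every parameter as a rational function of the covariances.
-/

open Finset

namespace LinearSEM

section Covariance

variable {S : Type*} [CommRing S] {n : ℕ}

lemma pow_apply_eq_zero_of_lt_add {Λ : Matrix (Fin n) (Fin n) S}
    (hΛ : ∀ i j, ¬ i < j → Λ i j = 0) (k : ℕ) {i j : Fin n} (h : (j : ℕ) < i + k) :
    (Λ ^ k) i j = 0 := by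
  induction k generalizing j with
  | zero => exact one_apply_ne (by rintro rfl; omega)
  | succ k ih =>
    rw [pow_succ, mul_apply]
    refine sum_eq_zero fun l _ => ?_
    by_cases hl : (l : ℕ) < i + k
    · rw [ih hl, zero_mul]
    · rw [hΛ l j (by rw [Fin.lt_def]; omega), mul_zero]

lemma pow_card_eq_zero {Λ : Matrix (Fin n) (Fin n) S} (hΛ : ∀ i j, ¬ i < j → Λ i j = 0) :
    Λ ^ n = 0 := by
  ext i j
  exact pow_apply_eq_zero_of_lt_add hΛ n (by omega)

/-- `(1 - Λ)⁻¹` when `Λ` is strictly upper triangular, hence nilpotent with `Λ ^ n = 0`. -/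
def invOneSub (Λ : Matrix (Fin n) (Fin n) S) : Matrix (Fin n) (Fin n) S :=
  ∑ m ∈ range n, Λ ^ m

variable {Λ : Matrix (Fin n) (Fin n) S}

lemma invOneSub_mul_one_sub (hΛ : ∀ i j, ¬ i < j → Λ i j = 0) :
    invOneSub Λ * (1 - Λ) = 1 := by
  rw [invOneSub, ← neg_sub, mul_neg, geom_sum_mul, pow_card_eq_zero hΛ, zero_sub, neg_neg]

lemma one_sub_mul_invOneSub (hΛ : ∀ i j, ¬ i < j → Λ i j = 0) :
    (1 - Λ) * invOneSub Λ = 1 := by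
  rw [invOneSub, ← neg_sub, neg_mul, mul_geom_sum, pow_card_eq_zero hΛ, zero_sub, neg_neg]

lemma invOneSub_apply_of_lt (hΛ : ∀ i j, ¬ i < j → Λ i j = 0) {i j : Fin n} (h : j < i) :
    invOneSub Λ i j = 0 := by
  rw [invOneSub, Matrix.sum_apply]
  exact sum_eq_zero fun m _ => pow_apply_eq_zero_of_lt_add hΛ m (by rw [Fin.lt_def] at h; omega)

lemma invOneSub_apply_self (hΛ : ∀ i j, ¬ i < j → Λ i j = 0) (j : Fin n) :
    invOneSub Λ j j = 1 := by
  rw [invOneSub, Matrix.sum_apply, sum_eq_single_of_mem 0 (mem_range.2 j.pos)]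
  · simp
  · exact fun m _ hm => pow_apply_eq_zero_of_lt_add hΛ m (by omega)

lemma invOneSub_zero : invOneSub (0 : Matrix (Fin n) (Fin n) S) = 1 := by
  simpa using invOneSub_mul_one_sub (Λ := (0 : Matrix (Fin n) (Fin n) S)) (fun _ _ _ => rfl)

lemma map_invOneSub {S' : Type*} [CommRing S'] (f : S →+* S') :
    (invOneSub Λ).map f = invOneSub (Λ.map f) := by
  simp only [invOneSub, ← RingHom.mapMatrix_apply, map_sum, map_pow]

/-- The covariance matrix `(1 - Λ)⁻ᵀ diag(ω) (1 - Λ)⁻¹` of the linear structural equation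
model with edge weights `Λ` and noise variances `ω`. -/
def covMatrix (Λ : Matrix (Fin n) (Fin n) S) (ω : Fin n → S) : Matrix (Fin n) (Fin n) S :=
  (invOneSub Λ)ᵀ * diagonal ω * invOneSub Λ

lemma covMatrix_transpose (Λ : Matrix (Fin n) (Fin n) S) (ω : Fin n → S) :
    (covMatrix Λ ω)ᵀ = covMatrix Λ ω := by
  simp only [covMatrix, transpose_mul, transpose_transpose, diagonal_transpose, Matrix.mul_assoc]

lemma covMatrix_zero (ω : Fin n → S) : covMatrix 0 ω = diagonal ω := by
  simp [covMatrix, invOneSub_zero]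

lemma map_covMatrix {S' : Type*} [CommRing S'] (f : S →+* S') (ω : Fin n → S) :
    (covMatrix Λ ω).map f = covMatrix (Λ.map f) (f ∘ ω) := by
  simp only [covMatrix, Matrix.map_mul, transpose_map, map_invOneSub, diagonal_map (map_zero f)]
  rfl

variable (ω : Fin n → S)

lemma covMatrix_mul_one_sub (hΛ : ∀ i j, ¬ i < j → Λ i j = 0) :
    covMatrix Λ ω * (1 - Λ) = (invOneSub Λ)ᵀ * diagonal ω := by
  rw [covMatrix, Matrix.mul_assoc, invOneSub_mul_one_sub hΛ, Matrix.mul_one]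

lemma covMatrix_mul_one_sub_apply (hΛ : ∀ i j, ¬ i < j → Λ i j = 0) (k j : Fin n) :
    covMatrix Λ ω k j - ∑ i, covMatrix Λ ω k i * Λ i j = invOneSub Λ j k * ω j := by
  have h := congr_fun₂ (covMatrix_mul_one_sub ω hΛ) k j
  rwa [Matrix.mul_sub, Matrix.mul_one, Matrix.sub_apply, mul_apply, mul_diagonal,
    transpose_apply] at h

lemma covMatrix_apply_of_lt (hΛ : ∀ i j, ¬ i < j → Λ i j = 0) {k j : Fin n} (hkj : k < j) :
    covMatrix Λ ω k j = ∑ i, covMatrix Λ ω k i * Λ i j := by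
  have h := covMatrix_mul_one_sub_apply ω hΛ k j
  rw [invOneSub_apply_of_lt hΛ hkj, zero_mul, sub_eq_zero] at h
  exact h

lemma covMatrix_apply_self_sub (hΛ : ∀ i j, ¬ i < j → Λ i j = 0) (j : Fin n) :
    covMatrix Λ ω j j - ∑ i, covMatrix Λ ω j i * Λ i j = ω j := by
  rw [covMatrix_mul_one_sub_apply ω hΛ, invOneSub_apply_self hΛ, one_mul]

theorem eq_covMatrix {Sg : Matrix (Fin n) (Fin n) S} (hsymm : Sgᵀ = Sg)
    (hΛ : ∀ i j, ¬ i < j → Λ i j = 0)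
    (hrel : ∀ k j, k < j → Sg k j = ∑ i, Sg k i * Λ i j) :
    Sg = covMatrix Λ (fun j => Sg j j - ∑ i, Sg j i * Λ i j) := by
  set U : Matrix (Fin n) (Fin n) S := 1 - Λ with hUdef
  have hU : U.IsUpperTriangular := fun i j (hji : j < i) => by
    rw [hUdef, Matrix.sub_apply, one_apply_ne hji.ne', hΛ i j (not_lt.2 hji.le), sub_zero]
  have hSU_apply : ∀ k j, (Sg * U) k j = Sg k j - ∑ i, Sg k i * Λ i j := fun k j => by
    rw [Matrix.mul_sub, Matrix.mul_one, Matrix.sub_apply, mul_apply]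
  have hSU : (Sg * U).IsLowerTriangular := fun k j hkj => by
    rw [hSU_apply, ← hrel k j hkj, sub_self]
  have hW : Uᵀ * (Sg * U) = diagonal fun j => Sg j j - ∑ i, Sg j i * Λ i j := by
    have hlow : (Uᵀ * (Sg * U)).IsLowerTriangular := hU.transpose.mul hSU
    have hWsymm : (Uᵀ * (Sg * U))ᵀ = Uᵀ * (Sg * U) := by
      rw [transpose_mul, transpose_mul, transpose_transpose, hsymm, Matrix.mul_assoc]
    ext a b
    rcases lt_trichotomy a b with h | rfl | h
    · rw [hlow h, diagonal_apply_ne _ h.ne]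
    · rw [diagonal_apply_eq, mul_apply, sum_eq_single a, transpose_apply, hUdef, Matrix.sub_apply,
        one_apply_eq, hΛ a a (lt_irrefl a), sub_zero, one_mul, hSU_apply]
      · intro i _ hia
        rcases hia.lt_or_gt with hia | hia
        · rw [hSU hia, mul_zero]
        · rw [transpose_apply, hU hia, zero_mul]
      · exact fun h => absurd (mem_univ a) h
    · rw [← hWsymm, transpose_apply, hlow h, diagonal_apply_ne _ h.ne']
  calc Sg = (U * invOneSub Λ)ᵀ * Sg * (U * invOneSub Λ) := by
        rw [one_sub_mul_invOneSub hΛ, transpose_one, Matrix.one_mul, Matrix.mul_one]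
    _ = (invOneSub Λ)ᵀ * (Uᵀ * (Sg * U)) * invOneSub Λ := by
        simp only [transpose_mul, Matrix.mul_assoc]
    _ = _ := by rw [hW, covMatrix]

end Covariance

section OrderEmb

variable {α : Type*} [LinearOrder α] {K : Finset α}

lemma orderEmbOfFin_insert_comp_succAbove {k : α}
    (hA : (insert k K).card = K.card + 1) {p : Fin (K.card + 1)}
    (hp : (insert k K).orderEmbOfFin hA p = k) :
    (insert k K).orderEmbOfFin hA ∘ p.succAbove = K.orderEmbOfFin rfl := by
  refine orderEmbOfFin_unique rfl (fun r => ?_) (((insert k K).orderEmbOfFin hA).strictMono.comp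
    (Fin.strictMono_succAbove p))
  rcases mem_insert.1 (orderEmbOfFin_mem (insert k K) hA (p.succAbove r)) with h | h
  · exact absurd (((insert k K).orderEmbOfFin hA).injective (h.trans hp.symm))
      (Fin.succAbove_ne p r)
  · exact h

lemma orderEmbOfFin_insert_last {j : α} (hj : ∀ x ∈ K, x < j)
    (hB : (insert j K).card = K.card + 1) :
    (insert j K).orderEmbOfFin hB (Fin.last _) = j := by
  rw [show Fin.last K.card = ⟨K.card + 1 - 1, by omega⟩ from rfl,
    orderEmbOfFin_last hB K.card.succ_pos]
  exact le_antisymm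
    (max'_le _ _ _ fun x hx => (mem_insert.1 hx).elim le_of_eq fun hx => (hj x hx).le)
    (le_max' _ _ (mem_insert_self j K))

lemma orderEmbOfFin_insert_castSucc {j : α} (hj : ∀ x ∈ K, x < j)
    (hB : (insert j K).card = K.card + 1) (r : Fin K.card) :
    (insert j K).orderEmbOfFin hB r.castSucc = K.orderEmbOfFin rfl r := by
  rw [← Fin.succAbove_last, ← Function.comp_apply (f := (insert j K).orderEmbOfFin hB),
    orderEmbOfFin_insert_comp_succAbove hB (orderEmbOfFin_insert_last hj hB)]

end OrderEmb

section Minors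

variable {S : Type*} [CommRing S] {n : ℕ}

lemma fminor_eq_det (M : Matrix (Fin n) (Fin n) S) (A B : Finset (Fin n)) (h : B.card = A.card)
    {m : ℕ} (hA : A.card = m) (hB : B.card = m) :
    fminor M A B h
      = (of fun r l : Fin m => M (A.orderEmbOfFin hA r) (B.orderEmbOfFin hB l)).det := by
  subst hA
  rfl

lemma map_fminor {S' : Type*} [CommRing S'] (f : S →+* S') (M : Matrix (Fin n) (Fin n) S)
    (A B : Finset (Fin n)) (h : B.card = A.card) :
    f (fminor M A B h) = fminor (M.map f) A B h := by
  rw [fminor, RingHom.map_det]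
  rfl

lemma fminor_self_eq_det_submatrix (M : Matrix (Fin n) (Fin n) S) (A : Finset (Fin n)) :
    fminor M A A rfl = (M.submatrix ((↑) : A → Fin n) (↑)).det := by
  rw [← det_submatrix_equiv_self (A.orderIsoOfFin rfl).toEquiv]
  simp only [fminor, submatrix, of_apply, RelIso.coe_fn_toEquiv, coe_orderIsoOfFin_apply]

lemma fminor_diagonal (d : Fin n → S) (A : Finset (Fin n)) :
    fminor (diagonal d) A A rfl = ∏ i ∈ A, d i := by
  rw [fminor_self_eq_det_submatrix, submatrix_diagonal _ _ Subtype.val_injective, det_diagonal]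
  exact prod_coe_sort A d

theorem fminor_insert_insert {Sg : Matrix (Fin n) (Fin n) S} {K : Finset (Fin n)} {j k : Fin n}
    (c : Fin n → S) (hj : ∀ x ∈ K, x < j) (hk : k ∉ K)
    (h : (insert j K).card = (insert k K).card)
    (hrel : ∀ r ∈ K, Sg r j = ∑ i ∈ K, c i * Sg r i) :
    ∃ e : ℕ, fminor Sg (insert k K) (insert j K) h
      = (-1) ^ e * fminor Sg K K rfl * (Sg k j - ∑ i ∈ K, c i * Sg k i) := by
  have hB : (insert j K).card = K.card + 1 := card_insert_of_notMem fun h => (hj j h).false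
  have hA : (insert k K).card = K.card + 1 := card_insert_of_notMem hk
  set eK := K.orderEmbOfFin rfl
  set N : Matrix (Fin (K.card + 1)) (Fin (K.card + 1)) S :=
    of fun r l => Sg ((insert k K).orderEmbOfFin hA r) ((insert j K).orderEmbOfFin hB l) with hN
  set ε := Sg k j - ∑ i ∈ K, c i * Sg k i
  obtain ⟨p, hp⟩ : ∃ p, (insert k K).orderEmbOfFin hA p = k := by
    rw [← Set.mem_range, range_orderEmbOfFin]
    exact mem_insert_self k K
  have hrows := orderEmbOfFin_insert_comp_succAbove hA hp
  set v : Fin (K.card + 1) → S := Fin.snoc (fun l => -c (eK l)) 1 with hv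
  -- `v` encodes the relation, so `N *ᵥ v` is its defect, which vanishes off row `k`
  have hNv : N *ᵥ v = Pi.single p ε := by
    have hdefect : ∀ r, (N *ᵥ v) r = Sg ((insert k K).orderEmbOfFin hA r) j
        - ∑ i ∈ K, c i * Sg ((insert k K).orderEmbOfFin hA r) i := fun r => by
      rw [mulVec, dotProduct, Fin.sum_univ_castSucc, ← sum_coe_sort K,
        ← (K.orderIsoOfFin rfl).toEquiv.sum_comp]
      simp only [N, v, of_apply, Fin.snoc_castSucc, Fin.snoc_last, mul_one, mul_neg,
        sum_neg_distrib, RelIso.coe_fn_toEquiv, coe_orderIsoOfFin_apply,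
        orderEmbOfFin_insert_castSucc hj, orderEmbOfFin_insert_last hj]
      simp only [eK, mul_comm]
      ring
    funext r
    rw [hdefect]
    rcases eq_or_ne r p with rfl | hr
    · rw [hp, Pi.single_eq_same]
    · obtain ⟨r', rfl⟩ := Fin.exists_succAbove_eq hr
      rw [Pi.single_eq_of_ne hr, ← Function.comp_apply (f := (insert k K).orderEmbOfFin hA),
        hrows, ← hrel _ (orderEmbOfFin_mem K rfl r'), sub_self]
  have hdet : N.det = N.adjugate (Fin.last _) p * ε := by
    have h := congr_fun (congr_arg (N.adjugate *ᵥ ·) hNv) (Fin.last _)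
    have hsingle : (N.adjugate *ᵥ Pi.single p ε) (Fin.last _) = N.adjugate (Fin.last _) p * ε := by
      simp [mulVec, dotProduct, Pi.single_apply]
    rwa [mulVec_mulVec, adjugate_mul, smul_mulVec, one_mulVec, Pi.smul_apply, smul_eq_mul, hv,
      Fin.snoc_last, mul_one, hsingle] at h
  have hadj : N.submatrix p.succAbove (Fin.last _).succAbove = of fun r l => Sg (eK r) (eK l) := by
    ext r l
    rw [submatrix_apply, Fin.succAbove_last, hN, of_apply, of_apply,
      orderEmbOfFin_insert_castSucc hj, ← Function.comp_apply (f := (insert k K).orderEmbOfFin hA),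
      hrows]
  refine ⟨p + K.card, ?_⟩
  rw [fminor_eq_det Sg _ _ h hA hB, hdet, adjugate_fin_succ_eq_det_submatrix, hadj, Fin.val_last]
  rfl

end Minors

section Regression

variable {S : Type*} [CommRing S] {n : ℕ} (E : Fin n → Fin n → Prop) [DecidableRel E]

lemma mem_parents {i j : Fin n} : i ∈ parents E j ↔ E i j := by
  simp [parents]

lemma sum_mul_eq_sum_parents {Λ : Matrix (Fin n) (Fin n) S} (hΛ : ∀ i j, ¬ E i j → Λ i j = 0)
    (g : Fin n → S) (j : Fin n) :
    ∑ i, g i * Λ i j = ∑ i ∈ parents E j, g i * Λ i j :=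
  (sum_subset (subset_univ _) fun i _ hi => by
    rw [hΛ i j fun h => hi ((mem_parents E).2 h), mul_zero]).symm

def parentBlock (Sg : Matrix (Fin n) (Fin n) S) (j : Fin n) :
    Matrix (parents E j) (parents E j) S :=
  Sg.submatrix (↑) (↑)

def regCoeff (Sg : Matrix (Fin n) (Fin n) S) : Matrix (Fin n) (Fin n) S := fun i j =>
  if h : E i j then ((parentBlock E Sg j)⁻¹ *ᵥ fun r => Sg r j) ⟨i, (mem_parents E).2 h⟩ else 0

def condVar (Sg : Matrix (Fin n) (Fin n) S) (j : Fin n) : S :=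
  Sg j j - ∑ i, Sg j i * regCoeff E Sg i j

variable {E}

lemma regCoeff_of_not {Sg : Matrix (Fin n) (Fin n) S} {i j : Fin n} (h : ¬ E i j) :
    regCoeff E Sg i j = 0 :=
  dif_neg h

lemma regCoeff_coe (Sg : Matrix (Fin n) (Fin n) S) (j : Fin n) (i : parents E j) :
    regCoeff E Sg i j = ((parentBlock E Sg j)⁻¹ *ᵥ fun r => Sg r j) i :=
  dif_pos ((mem_parents E).1 i.2)

lemma det_parentBlock (Sg : Matrix (Fin n) (Fin n) S) (j : Fin n) :
    (parentBlock E Sg j).det = fminor Sg (parents E j) (parents E j) rfl :=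
  (fminor_self_eq_det_submatrix Sg _).symm

lemma isUnit_det_parentBlock {Sg : Matrix (Fin n) (Fin n) S}
    (hu : ∀ j, IsUnit (fminor Sg (parents E j) (parents E j) rfl)) (j : Fin n) :
    IsUnit (parentBlock E Sg j).det :=
  det_parentBlock (E := E) Sg j ▸ hu j

lemma parentBlock_mulVec {Sg Λ : Matrix (Fin n) (Fin n) S} (hΛ : ∀ i j, ¬ E i j → Λ i j = 0)
    (j : Fin n) (r : parents E j) :
    (parentBlock E Sg j *ᵥ fun i => Λ i j) r = ∑ i, Sg r i * Λ i j := by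
  rw [sum_mul_eq_sum_parents E hΛ, ← sum_coe_sort]
  rfl

lemma sum_mul_regCoeff {Sg : Matrix (Fin n) (Fin n) S}
    (hu : ∀ j, IsUnit (fminor Sg (parents E j) (parents E j) rfl)) {r j : Fin n}
    (hr : r ∈ parents E j) :
    ∑ i, Sg r i * regCoeff E Sg i j = Sg r j := by
  rw [← parentBlock_mulVec (E := E) (Sg := Sg) (fun _ _ => regCoeff_of_not) j ⟨r, hr⟩]
  simp only [regCoeff_coe, mulVec_mulVec,
    mul_nonsing_inv _ (isUnit_det_parentBlock hu j), one_mulVec]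

lemma regCoeff_eq {Sg Λ : Matrix (Fin n) (Fin n) S}
    (hu : ∀ j, IsUnit (fminor Sg (parents E j) (parents E j) rfl))
    (hΛ : ∀ i j, ¬ E i j → Λ i j = 0)
    (hrel : ∀ r j, r ∈ parents E j → Sg r j = ∑ i, Sg r i * Λ i j) :
    regCoeff E Sg = Λ := by
  ext i j
  by_cases h : E i j
  · have hsys : (parentBlock E Sg j *ᵥ fun i : parents E j => Λ i j) =
        fun r : parents E j => Sg r j :=
      funext fun r => (parentBlock_mulVec hΛ j r).trans (hrel r j r.2).symm
    rw [regCoeff_coe Sg j ⟨i, (mem_parents E).2 h⟩, ← hsys, mulVec_mulVec,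
      nonsing_inv_mul _ (isUnit_det_parentBlock hu j), one_mulVec]
  · rw [regCoeff_of_not h, hΛ i j h]

variable {Λ : Matrix (Fin n) (Fin n) S} (ω : Fin n → S)

lemma regCoeff_covMatrix (hE : ∀ i j, E i j → i < j) (hΛ : ∀ i j, ¬ E i j → Λ i j = 0)
    (hu : ∀ j, IsUnit (fminor (covMatrix Λ ω) (parents E j) (parents E j) rfl)) :
    regCoeff E (covMatrix Λ ω) = Λ :=
  regCoeff_eq hu hΛ fun _ _ hr => covMatrix_apply_of_lt ω
    (fun i j h => hΛ i j fun he => h (hE i j he)) (hE _ _ ((mem_parents E).1 hr))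

lemma condVar_covMatrix (hE : ∀ i j, E i j → i < j) (hΛ : ∀ i j, ¬ E i j → Λ i j = 0)
    (hu : ∀ j, IsUnit (fminor (covMatrix Λ ω) (parents E j) (parents E j) rfl)) :
    condVar E (covMatrix Λ ω) = ω := by
  funext j
  rw [condVar, regCoeff_covMatrix ω hE hΛ hu,
    covMatrix_apply_self_sub ω (fun i j h => hΛ i j fun he => h (hE i j he))]

lemma map_nonsing_inv {S' : Type*} [CommRing S'] {m : Type*} [Fintype m] [DecidableEq m]
    (f : S →+* S') {A : Matrix m m S} (hA : IsUnit A.det) :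
    (A.map f)⁻¹ = A⁻¹.map f :=
  inv_eq_left_inv <| by
    rw [← Matrix.map_mul, nonsing_inv_mul A hA, Matrix.map_one _ (map_zero f) (map_one f)]

variable {S' : Type*} [CommRing S'] (f : S →+* S') {Sg : Matrix (Fin n) (Fin n) S}

lemma map_regCoeff (hu : ∀ j, IsUnit (fminor Sg (parents E j) (parents E j) rfl)) :
    (regCoeff E Sg).map f = regCoeff E (Sg.map f) := by
  ext i j
  by_cases h : E i j
  · rw [map_apply, regCoeff, regCoeff, dif_pos h, dif_pos h, RingHom.map_mulVec,
      ← map_nonsing_inv f (isUnit_det_parentBlock hu j)]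
    rfl
  · rw [map_apply, regCoeff_of_not h, regCoeff_of_not h, map_zero]

lemma map_condVar (hu : ∀ j, IsUnit (fminor Sg (parents E j) (parents E j) rfl)) (j : Fin n) :
    f (condVar E Sg j) = condVar E (Sg.map f) j := by
  simp only [condVar, map_sub, map_sum, map_mul, ← map_regCoeff f hu, map_apply]

theorem covMatrix_regCoeff (hE : ∀ i j, E i j → i < j) (hsymm : Sgᵀ = Sg)
    (hu : ∀ j, IsUnit (fminor Sg (parents E j) (parents E j) rfl))
    (hminor : ∀ i j, i < j → ¬ E i j → ∀ h, fminor Sg (insert i (parents E j))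
      (insert j (parents E j)) h = 0) :
    covMatrix (regCoeff E Sg) (condVar E Sg) = Sg := by
  have hpa : ∀ {x j}, x ∈ parents E j → x < j := fun hx => hE _ _ ((mem_parents E).1 hx)
  refine (eq_covMatrix hsymm (fun i j h => regCoeff_of_not fun he => h (hE i j he))
    fun k j hkj => ?_).symm
  by_cases hk : k ∈ parents E j
  · exact (sum_mul_regCoeff hu hk).symm
  · have hcomm : ∀ r, ∑ i, Sg r i * regCoeff E Sg i j
        = ∑ i ∈ parents E j, regCoeff E Sg i j * Sg r i := fun r => by
      rw [sum_mul_eq_sum_parents E (fun _ _ => regCoeff_of_not)]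
      simp only [mul_comm]
    have hcard : (insert j (parents E j)).card = (insert k (parents E j)).card := by
      rw [card_insert_of_notMem fun h => (hpa h).false, card_insert_of_notMem hk]
    obtain ⟨e, he⟩ := fminor_insert_insert (Sg := Sg) (fun i => regCoeff E Sg i j)
      (fun _ => hpa) hk hcard fun r hr => by rw [← hcomm, sum_mul_regCoeff hu hr]
    rw [hminor k j hkj (fun h => hk ((mem_parents E).2 h)) hcard, eq_comm,
      ((isUnit_one.neg.pow e).mul (hu j)).mul_right_eq_zero, sub_eq_zero] at he
    rw [he, hcomm]

lemma fminor_covMatrix_eq_zero (hE : ∀ i j, E i j → i < j) (hΛ : ∀ i j, ¬ E i j → Λ i j = 0)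
    {i j : Fin n} (hij : i < j) (hnij : ¬ E i j)
    (h : (insert j (parents E j)).card = (insert i (parents E j)).card) :
    fminor (covMatrix Λ ω) (insert i (parents E j)) (insert j (parents E j)) h = 0 := by
  have hrel : ∀ r, r < j → covMatrix Λ ω r j = ∑ l ∈ parents E j, Λ l j * covMatrix Λ ω r l :=
    fun r hr => by
      rw [covMatrix_apply_of_lt ω (fun a b h => hΛ a b fun he => h (hE a b he)) hr,
        sum_mul_eq_sum_parents E hΛ]
      simp only [mul_comm]
  obtain ⟨e, he⟩ := fminor_insert_insert (Sg := covMatrix Λ ω) (fun l => Λ l j)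
    (fun x hx => hE x j ((mem_parents E).1 hx)) (fun h => hnij ((mem_parents E).1 h)) h
    fun r hr => hrel r (hE r j ((mem_parents E).1 hr))
  rw [he, hrel i hij, sub_self, mul_zero]

end Regression

section Parametrization

variable {n : ℕ} (E : Fin n → Fin n → Prop) [DecidableRel E]

lemma genMat_transpose : (genMat n)ᵀ = genMat n :=
  Matrix.ext fun _ _ => congr_arg X Sym2.eq_swap

/-- The parameters of the model: one noise variance per node and one weight per edge. -/
def paramVarEquiv : Fin n ⊕ {p : Fin n × Fin n // E p.1 p.2} ≃ Fin (n + edgeCount E) :=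
  Fintype.equivFinOfCardEq (by rw [Fintype.card_sum, Fintype.card_fin, Fintype.card_subtype]; rfl)

abbrev ParamRing : Type := MvPolynomial (Fin (n + edgeCount E)) ℂ

def genEdgeWeight : Matrix (Fin n) (Fin n) (ParamRing E) := fun i j =>
  if h : E i j then X (paramVarEquiv E (.inr ⟨(i, j), h⟩)) else 0

def genNoiseVar (j : Fin n) : ParamRing E := X (paramVarEquiv E (.inl j))

lemma genEdgeWeight_of_not {i j : Fin n} (h : ¬ E i j) : genEdgeWeight E i j = 0 := dif_neg h

def param : MvPolynomial (Sym2 (Fin n)) ℂ →ₐ[ℂ] ParamRing E :=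
  aeval <| Sym2.lift ⟨fun i j => covMatrix (genEdgeWeight E) (genNoiseVar E) i j,
    fun i j => congr_fun₂ (covMatrix_transpose _ _) j i⟩

lemma map_genMat_param {S : Type*} [CommRing S] [Algebra ℂ S] (f : ParamRing E →ₐ[ℂ] S) :
    (genMat n).map (f.comp (param E))
      = covMatrix ((genEdgeWeight E).map f) (f ∘ genNoiseVar E) := by
  ext i j : 1
  simpa [genMat, param] using
    congr_fun₂ (map_covMatrix (f : ParamRing E →+* S) (genNoiseVar E)) i j

lemma algHom_ext_genMat {S : Type*} [CommRing S] [Algebra ℂ S]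
    {f g : MvPolynomial (Sym2 (Fin n)) ℂ →ₐ[ℂ] S} (h : (genMat n).map f = (genMat n).map g) :
    f = g :=
  algHom_ext fun s => Sym2.ind (fun i j => congr_fun₂ h i j) s

lemma impIdeal_le_ker_param (hE : ∀ i j, E i j → i < j) :
    impIdeal E ≤ RingHom.ker (param E) := by
  rw [impIdeal, Ideal.span_le]
  rintro _ ⟨i, j, hij, hnij, h, rfl⟩
  have hφ := map_genMat_param E (AlgHom.id ℂ (ParamRing E))
  rw [AlgHom.id_comp] at hφ
  rw [SetLike.mem_coe, RingHom.mem_ker, ← AlgHom.coe_toRingHom, map_fminor, AlgHom.coe_toRingHom,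
    hφ]
  exact fminor_covMatrix_eq_zero _ hE (fun _ _ => genEdgeWeight_of_not E) hij hnij h

def unitPoint : Fin (n + edgeCount E) → ℂ :=
  fun v => Sum.elim (fun _ => 1) (fun _ => 0) ((paramVarEquiv E).symm v)

lemma param_fminor_ne_zero (A : Finset (Fin n)) :
    param E (fminor (genMat n) A A rfl) ≠ 0 := by
  intro h
  have h1 := congr_arg (aeval (unitPoint E)) h
  have hΛ : (genEdgeWeight E).map (aeval (unitPoint E)) = 0 := by
    ext i j
    by_cases hij : E i j <;> simp [genEdgeWeight, hij, unitPoint]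
  have hω : aeval (unitPoint E) ∘ genNoiseVar E = 1 := by
    funext j
    simp [genNoiseVar, unitPoint]
  rw [← AlgHom.comp_apply, ← AlgHom.coe_toRingHom, map_fminor, AlgHom.coe_toRingHom,
    map_genMat_param, hΛ, hω, covMatrix_zero, fminor_diagonal, map_zero] at h1
  simp at h1

/-- The rational inverse of `param`: a matrix is sent to its regression parameters. -/
def invParam {S : Type*} [CommRing S] [Algebra ℂ S] (Sg : Matrix (Fin n) (Fin n) S) :
    ParamRing E →ₐ[ℂ] S :=
  aeval fun v => Sum.elim (condVar E Sg) (fun e => regCoeff E Sg e.1.1 e.1.2)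
    ((paramVarEquiv E).symm v)

variable {S : Type*} [CommRing S] [Algebra ℂ S]

lemma invParam_X_inl (Sg : Matrix (Fin n) (Fin n) S) (j : Fin n) :
    invParam E Sg (X (paramVarEquiv E (.inl j))) = condVar E Sg j := by
  simp [invParam]

lemma invParam_X_inr (Sg : Matrix (Fin n) (Fin n) S) (e : {p : Fin n × Fin n // E p.1 p.2}) :
    invParam E Sg (X (paramVarEquiv E (.inr e))) = regCoeff E Sg e.1.1 e.1.2 := by
  simp [invParam]

lemma map_genEdgeWeight_invParam (Sg : Matrix (Fin n) (Fin n) S) :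
    (genEdgeWeight E).map (invParam E Sg) = regCoeff E Sg := by
  ext i j
  by_cases h : E i j
  · rw [map_apply, genEdgeWeight, dif_pos h, invParam_X_inr]
  · rw [map_apply, genEdgeWeight_of_not E h, map_zero, regCoeff_of_not h]

lemma invParam_comp_genNoiseVar (Sg : Matrix (Fin n) (Fin n) S) :
    invParam E Sg ∘ genNoiseVar E = condVar E Sg :=
  funext (invParam_X_inl E Sg)

lemma algHom_ext_paramRing {f g : ParamRing E →ₐ[ℂ] S}
    (hω : ∀ j, f (genNoiseVar E j) = g (genNoiseVar E j))
    (hΛ : ∀ i j, E i j → f (genEdgeWeight E i j) = g (genEdgeWeight E i j)) : f = g := by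
  refine algHom_ext fun v => ?_
  obtain ⟨w, rfl⟩ := (paramVarEquiv E).surjective v
  rcases w with j | ⟨⟨i, j⟩, h⟩
  · exact hω j
  · simpa [genEdgeWeight, h] using hΛ i j h

lemma isUnit_fminor_of_isUnit_theta0 (ρ : MvPolynomial (Sym2 (Fin n)) ℂ →ₐ[ℂ] S)
    (hθ : IsUnit (ρ (theta0 n))) (A : Finset (Fin n)) :
    IsUnit (fminor ((genMat n).map ρ) A A rfl) := by
  rw [← AlgHom.coe_toRingHom, ← map_fminor]
  exact isUnit_of_dvd_unit
    (map_dvd ρ (dvd_prod_of_mem (fun A => fminor (genMat n) A A rfl) (mem_univ A))) hθ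

theorem invParam_comp_param (hE : ∀ i j, E i j → i < j)
    (ρ : MvPolynomial (Sym2 (Fin n)) ℂ →ₐ[ℂ] S) (hθ : IsUnit (ρ (theta0 n)))
    (hI : ∀ f ∈ impIdeal E, ρ f = 0) :
    (invParam E ((genMat n).map ρ)).comp (param E) = ρ := by
  refine algHom_ext_genMat ?_
  rw [map_genMat_param, map_genEdgeWeight_invParam, invParam_comp_genNoiseVar]
  refine covMatrix_regCoeff hE (by rw [← transpose_map, genMat_transpose])
    (fun j => isUnit_fminor_of_isUnit_theta0 ρ hθ _) fun i j hij hnij h => ?_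
  rw [← AlgHom.coe_toRingHom, ← map_fminor]
  exact hI _ (Ideal.subset_span ⟨i, j, hij, hnij, h, rfl⟩)

theorem invParam_map_param (hE : ∀ i j, E i j → i < j) (f : ParamRing E →ₐ[ℂ] S)
    (hu : ∀ A, IsUnit (f (param E (fminor (genMat n) A A rfl)))) :
    invParam E ((genMat n).map (f.comp (param E))) = f := by
  have hΛ : ∀ i j, ¬ E i j → (genEdgeWeight E).map f i j = 0 := fun i j h => by
    rw [map_apply, genEdgeWeight_of_not E h, map_zero]
  have hu' : ∀ A, IsUnit (fminor (covMatrix ((genEdgeWeight E).map f) (f ∘ genNoiseVar E))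
      A A rfl) := fun A => by
    rw [← map_genMat_param, ← AlgHom.coe_toRingHom, ← map_fminor]
    exact hu A
  refine algHom_ext_paramRing E (fun j => ?_) fun i j h => ?_
  · rw [map_genMat_param, ← Function.comp_apply (f := invParam E _), invParam_comp_genNoiseVar,
      condVar_covMatrix _ hE hΛ (fun j => hu' _)]
    rfl
  · rw [← map_apply (f := invParam E _), map_genEdgeWeight_invParam, map_genMat_param,
      regCoeff_covMatrix _ hE hΛ (fun j => hu' _)]
    rfl

lemma map_invParam {S' : Type*} [CommRing S'] [Algebra ℂ S'] (g : S →ₐ[ℂ] S')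
    {Sg : Matrix (Fin n) (Fin n) S}
    (hu : ∀ j, IsUnit (fminor Sg (parents E j) (parents E j) rfl)) :
    g.comp (invParam E Sg) = invParam E (Sg.map g) := by
  refine algHom_ext_paramRing E (fun j => ?_) fun i j _ => ?_
  · rw [AlgHom.comp_apply, ← Function.comp_apply (f := invParam E _), invParam_comp_genNoiseVar,
      ← Function.comp_apply (f := invParam E _), invParam_comp_genNoiseVar]
    exact map_condVar (g : S →+* S') hu j
  · rw [AlgHom.comp_apply, ← map_apply (f := invParam E _), map_genEdgeWeight_invParam,
      ← map_apply (f := invParam E _), map_genEdgeWeight_invParam]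
    exact congr_fun₂ (map_regCoeff (g : S →+* S') hu) i j

end Parametrization

lemma mem_satIdeal_iff {R : Type*} [CommRing R] (I : Ideal R) (g f : R) :
    f ∈ satIdeal I g ↔ algebraMap (R ⧸ I) (Localization.Away (Ideal.Quotient.mk I g))
      (Ideal.Quotient.mk I f) = 0 := by
  rw [IsLocalization.map_eq_zero_iff (Submonoid.powers (Ideal.Quotient.mk I g))]
  simp only [Subtype.exists, Submonoid.mem_powers_iff, exists_prop, exists_exists_eq_and,
    ← map_pow, ← map_mul, Ideal.Quotient.eq_zero_iff_mem]
  rfl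

section Kernel

variable {n : ℕ} {E : Fin n → Fin n → Prop} [DecidableRel E]

lemma param_theta0_ne_zero : param E (theta0 n) ≠ 0 := by
  rw [theta0, map_prod]
  exact prod_ne_zero_iff.2 fun A _ => param_fminor_ne_zero E A

theorem mem_satPG_iff (hE : ∀ i j, E i j → i < j) (f : MvPolynomial (Sym2 (Fin n)) ℂ) :
    f ∈ satPG E ↔ param E f = 0 := by
  constructor
  · rintro ⟨m, hm⟩
    have h := impIdeal_le_ker_param E hE hm
    rw [RingHom.mem_ker, map_mul, map_pow] at h
    exact (mul_eq_zero.1 h).resolve_left (pow_ne_zero m param_theta0_ne_zero)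
  · intro hf
    let T := Localization.Away (Ideal.Quotient.mk (impIdeal E) (theta0 n))
    let ρ : MvPolynomial (Sym2 (Fin n)) ℂ →ₐ[ℂ] T :=
      (IsScalarTower.toAlgHom ℂ _ T).comp (Ideal.Quotient.mkₐ ℂ (impIdeal E))
    have hρ := invParam_comp_param E hE ρ
      (IsLocalization.Away.algebraMap_isUnit (Ideal.Quotient.mk (impIdeal E) (theta0 n)))
      fun f hf => by simp [ρ, Ideal.Quotient.eq_zero_iff_mem.2 hf]
    rw [satPG, mem_satIdeal_iff]
    change ρ f = 0
    rw [← hρ, AlgHom.comp_apply, hf, map_zero]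

end Kernel

section FractionField

variable {n : ℕ} {E : Fin n → Fin n → Prop} [DecidableRel E]

def quotientEmbedding (hE : ∀ i j, E i j → i < j) :
    MvPolynomial (Sym2 (Fin n)) ℂ ⧸ satPG E →ₐ[ℂ] FractionRing (ParamRing E) :=
  Ideal.Quotient.liftₐ (satPG E) ((IsScalarTower.toAlgHom ℂ _ _).comp (param E)) fun a ha => by
    rw [AlgHom.comp_apply, (mem_satPG_iff hE a).1 ha, map_zero]

lemma quotientEmbedding_mk (hE : ∀ i j, E i j → i < j) (r : MvPolynomial (Sym2 (Fin n)) ℂ) :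
    quotientEmbedding hE (Ideal.Quotient.mk _ r) = algebraMap _ _ (param E r) :=
  rfl

lemma quotientEmbedding_injective (hE : ∀ i j, E i j → i < j) :
    Function.Injective (quotientEmbedding hE) := by
  refine (injective_iff_map_eq_zero _).2 fun x hx => ?_
  obtain ⟨r, rfl⟩ := Ideal.Quotient.mk_surjective x
  rw [Ideal.Quotient.eq_zero_iff_mem, mem_satPG_iff hE]
  exact IsFractionRing.injective (ParamRing E) _ (hx.trans (map_zero _).symm)

lemma isDomain_quotient_satPG (hE : ∀ i j, E i j → i < j) :
    IsDomain (MvPolynomial (Sym2 (Fin n)) ℂ ⧸ satPG E) :=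
  (quotientEmbedding_injective hE).isDomain _

variable [IsDomain (MvPolynomial (Sym2 (Fin n)) ℂ ⧸ satPG E)]

def toFrac : MvPolynomial (Sym2 (Fin n)) ℂ →ₐ[ℂ]
    FractionRing (MvPolynomial (Sym2 (Fin n)) ℂ ⧸ satPG E) :=
  (IsScalarTower.toAlgHom ℂ _ _).comp (Ideal.Quotient.mkₐ ℂ (satPG E))

def fracLift (hE : ∀ i j, E i j → i < j) :
    FractionRing (MvPolynomial (Sym2 (Fin n)) ℂ ⧸ satPG E) →ₐ[ℂ] FractionRing (ParamRing E) :=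
  IsFractionRing.liftAlgHom (quotientEmbedding_injective hE)

lemma fracLift_comp_toFrac (hE : ∀ i j, E i j → i < j) :
    (fracLift hE).comp toFrac = (IsScalarTower.toAlgHom ℂ _ _).comp (param E) :=
  AlgHom.ext fun r => by
    rw [AlgHom.comp_apply, fracLift, toFrac, AlgHom.comp_apply, IsScalarTower.coe_toAlgHom',
      IsFractionRing.coe_liftAlgHom, IsFractionRing.lift_algebraMap]
    exact quotientEmbedding_mk hE r

lemma fracLift_comp_invParam (hE : ∀ i j, E i j → i < j) :
    (fracLift hE).comp (invParam E ((genMat n).map toFrac))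
      = IsScalarTower.toAlgHom ℂ (ParamRing E) (FractionRing (ParamRing E)) := by
  have hne : ∀ A, algebraMap _ (FractionRing (ParamRing E)) (param E (fminor (genMat n) A A rfl))
      ≠ 0 := fun A h =>
    param_fminor_ne_zero E A (IsFractionRing.injective (ParamRing E) _ (h.trans (map_zero _).symm))
  have hfminor : ∀ A, fracLift hE (fminor ((genMat n).map toFrac) A A rfl)
      = algebraMap _ _ (param E (fminor (genMat n) A A rfl)) := fun A => by
    rw [← AlgHom.coe_toRingHom, map_fminor, AlgHom.coe_toRingHom, Matrix.map_map,
      ← AlgHom.coe_comp, fracLift_comp_toFrac, ← IsScalarTower.coe_toAlgHom' ℂ,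
      ← AlgHom.comp_apply, ← AlgHom.coe_toRingHom, map_fminor]
  rw [map_invParam E _ fun j =>
      isUnit_iff_ne_zero.2 fun h => hne _ (by rw [← hfminor, h, map_zero]),
    Matrix.map_map, ← AlgHom.coe_comp, fracLift_comp_toFrac,
    invParam_map_param E hE _ fun A => isUnit_iff_ne_zero.2 (hne A)]

lemma fracLift_surjective (hE : ∀ i j, E i j → i < j) : Function.Surjective (fracLift hE) := by
  intro z
  obtain ⟨x, y, -, rfl⟩ := IsFractionRing.div_surjective (A := ParamRing E) z
  refine ⟨invParam E ((genMat n).map toFrac) x / invParam E ((genMat n).map toFrac) y, ?_⟩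
  rw [map_div₀, ← AlgHom.comp_apply, ← AlgHom.comp_apply, fracLift_comp_invParam]
  rfl

end FractionField

end LinearSEM

open LinearSEM in
theorem fractionRing_quotient_satPG_rational_general {n : ℕ}
    (E : Fin n → Fin n → Prop) [DecidableRel E] (hE : ∀ i j, E i j → i < j) :
    Nonempty
      (FractionRing (MvPolynomial (Sym2 (Fin n)) ℂ ⧸ satPG E) ≃ₐ[ℂ]
        FractionRing (MvPolynomial (Fin (n + edgeCount E)) ℂ)) := by
  have := isDomain_quotient_satPG hE
  exact ⟨AlgEquiv.ofBijective (fracLift hE)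
    ⟨(fracLift hE).toRingHom.injective, fracLift_surjective hE⟩⟩

/-- Rationality (Proposition 2 of the paper): the fraction field of `R ⧸ p_G` is isomorphic, as
a `ℂ`-algebra, to the field of rational functions in `n + |E|` variables over `ℂ`. -/
theorem fractionRing_quotient_satPG_rational {n : ℕ} (hn : 1 ≤ n)
    (E : Fin n → Fin n → Prop) [DecidableRel E] (hE : ∀ i j, E i j → i < j) :
    Nonempty
      (FractionRing (MvPolynomial (Sym2 (Fin n)) ℂ ⧸ satPG E) ≃ₐ[ℂ]
        FractionRing (MvPolynomial (Fin (n + edgeCount E)) ℂ)) :=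
  fractionRing_quotient_satPG_rational_general E hE
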